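/- Suppose |h_j(x)| ≤ M for all x ∈ 𝒳 and j = 1,…,n. Then for every x ∈ 𝒳, λ ≥ 0, θ̂, θ̃ ∈ Θ and r̂, r̃ ∈ [0,1], |ν^λ(x, θ̂, r̂) − ν^λ(x, θ̃, r̃)| ≤ (nM + 2λ)(‖θ̂ − θ̃‖_∞ + |r̂ − r̃|). -/

import Mathlib

open Set Filter MeasureTheory
open scoped ENNReal

noncomputable section

/-- The probability simplex Θ in ℝⁿ. -/
def simplex (n : ℕ) : Set (Fin n → ℝ) := {θ | ∑ j, θ j = 1 ∧ ∀ j, 0 ≤ θ j}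

/-- Ambiguity set `𝔹∞(c, r) ∩ Θ`.  (The norm on `Fin n → ℝ` is the sup norm.) -/
def amb {n : ℕ} (c : Fin n → ℝ) (r : ℝ) : Set (Fin n → ℝ) :=
  {θ | ‖θ - c‖ ≤ r} ∩ simplex n

/-- Regularized lower-level objective `∑_j θ_j h_j(x) − λ‖θ‖²` (Euclidean norm squared). -/
def obj {n d : ℕ} (h : Fin n → (Fin d → ℝ) → ℝ) (lam : ℝ) (x : Fin d → ℝ)
    (θ : Fin n → ℝ) : ℝ :=
  (∑ j, θ j * h j x) - lam * ∑ j, (θ j) ^ 2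

/-- Optimal value `ν^λ(x, c, r)` of the regularized lower-level problem. -/
def nuval {n d : ℕ} (h : Fin n → (Fin d → ℝ) → ℝ) (lam : ℝ) (x : Fin d → ℝ)
    (c : Fin n → ℝ) (r : ℝ) : ℝ :=
  sSup (obj h lam x '' amb c r)

/-- Maximizer set `ϑ^λ(x, c, r)` of the regularized lower-level problem. -/
def argmaxSet {n d : ℕ} (h : Fin n → (Fin d → ℝ) → ℝ) (lam : ℝ) (x : Fin d → ℝ)
    (c : Fin n → ℝ) (r : ℝ) : Set (Fin n → ℝ) :=
  {θ ∈ amb c r | obj h lam x θ = nuval h lam x c r}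

/-- Normal cone of `X` at `x` (standard inner product on ℝ^d). -/
def normalCone {d : ℕ} (X : Set (Fin d → ℝ)) (x : Fin d → ℝ) : Set (Fin d → ℝ) :=
  {v | ∀ y ∈ X, ∑ i, v i * (y i - x i) ≤ 0}

/-- x-solution set `𝔛^λ(c, r)` of the (regularized) Bayesian DRVI. -/
def solSet {n d : ℕ} (G : Fin n → (Fin d → ℝ) → Fin d → ℝ)
    (h : Fin n → (Fin d → ℝ) → ℝ) (lam : ℝ) (X : Set (Fin d → ℝ))
    (c : Fin n → ℝ) (r : ℝ) : Set (Fin d → ℝ) :=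
  {x ∈ X | ∃ θ ∈ argmaxSet h lam x c r,
      ∀ y ∈ X, 0 ≤ ∑ i, (∑ j, θ j * G j x i) * (y i - x i)}

/-- One-sided deviation `𝔻(S, T)` (the metric of the Pi type is the sup metric). -/
def dev {α : Type*} [PseudoMetricSpace α] (S T : Set α) : ℝ :=
  sSup ((fun s => Metric.infDist s T) '' S)

/-- One-sided deviation with values in `ℝ≥0∞`. -/
def devE {α : Type*} [PseudoMetricSpace α] (S T : Set α) : ℝ≥0∞ :=
  ⨆ s ∈ S, ENNReal.ofReal (Metric.infDist s T)

/-- Lower-level growth function `ψ_x^λ` at parameters `(c, r)`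
(values in `[0,∞]`; the infimum over the empty set is `⊤`). -/
def psiLow {n d : ℕ} (h : Fin n → (Fin d → ℝ) → ℝ) (lam : ℝ) (x : Fin d → ℝ)
    (c : Fin n → ℝ) (r : ℝ) (τ : ℝ) : ℝ≥0∞ :=
  ⨅ θ ∈ {θ ∈ amb c r | τ ≤ Metric.infDist θ (argmaxSet h lam x c r)},
    ENNReal.ofReal (nuval h lam x c r - obj h lam x θ)

/-- Generalized inverse `(ψ_x^λ)⁻¹(t) = sup{τ ≥ 0 : ψ_x^λ(τ) ≤ t}`. -/
def psiLowInv {n d : ℕ} (h : Fin n → (Fin d → ℝ) → ℝ) (lam : ℝ) (x : Fin d → ℝ)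
    (c : Fin n → ℝ) (r : ℝ) (t : ℝ) : ℝ≥0∞ :=
  ⨆ τ ∈ {τ : ℝ | 0 ≤ τ ∧ psiLow h lam x c r τ ≤ ENNReal.ofReal t}, ENNReal.ofReal τ

/-- `Ψ_x^λ(η) = η + (ψ_x^λ)⁻¹(2η)`. -/
def PsiLow {n d : ℕ} (h : Fin n → (Fin d → ℝ) → ℝ) (lam : ℝ) (x : Fin d → ℝ)
    (c : Fin n → ℝ) (r : ℝ) (η : ℝ) : ℝ≥0∞ :=
  ENNReal.ofReal η + psiLowInv h lam x c r (2 * η)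

/-- Residual `d(0, ∑_j θ_j G_j(x) + N_X(x))` (ℓ∞ distance). -/
def resid {n d : ℕ} (G : Fin n → (Fin d → ℝ) → Fin d → ℝ) (X : Set (Fin d → ℝ))
    (x : Fin d → ℝ) (θ : Fin n → ℝ) : ℝ :=
  Metric.infDist (0 : Fin d → ℝ)
    ((fun w => (fun i => ∑ j, θ j * G j x i) + w) '' normalCone X x)

/-- Solution-set growth function `ψ^λ_{c,r}` (values in `[0,∞]`). -/
def psiSol {n d : ℕ} (G : Fin n → (Fin d → ℝ) → Fin d → ℝ)
    (h : Fin n → (Fin d → ℝ) → ℝ) (lam : ℝ) (X : Set (Fin d → ℝ))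
    (c : Fin n → ℝ) (r : ℝ) (τ : ℝ) : ℝ≥0∞ :=
  ⨅ x ∈ {x ∈ X | τ ≤ Metric.infDist x (solSet G h lam X c r)},
    ⨅ θ ∈ argmaxSet h lam x c r, ENNReal.ofReal (resid G X x θ)

/-- Generalized inverse `(ψ^λ_{c,r})⁻¹(t) = sup{τ ≥ 0 : ψ^λ_{c,r}(τ) ≤ t}`. -/
def psiSolInv {n d : ℕ} (G : Fin n → (Fin d → ℝ) → Fin d → ℝ)
    (h : Fin n → (Fin d → ℝ) → ℝ) (lam : ℝ) (X : Set (Fin d → ℝ))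
    (c : Fin n → ℝ) (r : ℝ) (t : ℝ) : ℝ≥0∞ :=
  ⨆ τ ∈ {τ : ℝ | 0 ≤ τ ∧ psiSol G h lam X c r τ ≤ ENNReal.ofReal t}, ENNReal.ofReal τ

/-
Moving the ambiguity parameters from `(c, r)` to `(c', r')` moves every feasible
`θ` by at most `‖c - c'‖ + |r - r'|`: if `θ` lies outside the new ball, slide it along the
segment towards the new centre `c'`, which stays in the (convex) simplex, until it reaches
distance `r'`. On the simplex the objective is Lipschitz for the sup norm with constant
`n M + 2λ`: the linear part contributes `n M`, and since `θ'ⱼ² - θⱼ² = (θ'ⱼ - θⱼ)(θ'ⱼ + θⱼ)`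
and the coordinates of `θ + θ'` sum to `2`, the quadratic part contributes `2λ`. Comparing
suprema in both directions gives the bound.
-/

theorem Convex.exists_mem_dist_le_max {E : Type*} [SeminormedAddCommGroup E] [NormedSpace ℝ E]
    {S : Set E} (hS : Convex ℝ S) {x c : E} (hx : x ∈ S) (hc : c ∈ S) {r : ℝ} (hr : 0 ≤ r) :
    ∃ y ∈ S, dist y c ≤ r ∧ dist x y ≤ max (dist x c - r) 0 := by
  rcases le_or_gt (dist x c) r with hxc | hxc
  · exact ⟨x, hx, hxc, by simp⟩
  have hpos : 0 < dist x c := hr.trans_lt hxc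
  have ht : r / dist x c ∈ Icc (0 : ℝ) 1 := ⟨div_nonneg hr hpos.le, (div_le_one hpos).2 hxc.le⟩
  refine ⟨AffineMap.lineMap c x (r / dist x c), hS.lineMap_mem hc hx ht, ?_, ?_⟩
  · rw [dist_lineMap_left, Real.norm_of_nonneg ht.1, dist_comm c, div_mul_cancel₀ _ hpos.ne']
  · rw [dist_comm, dist_lineMap_right, Real.norm_of_nonneg (sub_nonneg.2 ht.2), dist_comm c,
      sub_mul, one_mul, div_mul_cancel₀ _ hpos.ne']
    exact le_max_left _ _

theorem simplex_eq_stdSimplex (n : ℕ) : simplex n = stdSimplex ℝ (Fin n) := by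
  ext θ
  simp [simplex, stdSimplex, and_comm]

theorem convex_simplex (n : ℕ) : Convex ℝ (simplex n) :=
  simplex_eq_stdSimplex n ▸ convex_stdSimplex ℝ (Fin n)

theorem nonempty_of_mem_simplex {n : ℕ} {θ : Fin n → ℝ} (hθ : θ ∈ simplex n) :
    Nonempty (Fin n) := by
  obtain ⟨j, -, -⟩ := Finset.exists_ne_zero_of_sum_ne_zero (hθ.1.symm ▸ one_ne_zero)
  exact ⟨j⟩

theorem mem_amb_self {n : ℕ} {c : Fin n → ℝ} (hc : c ∈ simplex n) {r : ℝ} (hr : 0 ≤ r) :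
    c ∈ amb c r :=
  ⟨by simpa using hr, hc⟩

theorem exists_mem_amb_norm_sub_le {n : ℕ} {c c' θ : Fin n → ℝ} {r r' : ℝ}
    (hc' : c' ∈ simplex n) (hr' : 0 ≤ r') (hθ : θ ∈ amb c r) :
    ∃ θ' ∈ amb c' r', ‖θ - θ'‖ ≤ ‖c - c'‖ + |r - r'| := by
  obtain ⟨θ', hθ', hθ'c', hθθ'⟩ := (convex_simplex n).exists_mem_dist_le_max hθ.2 hc' hr'
  refine ⟨θ', ⟨(dist_eq_norm θ' c').symm.trans_le hθ'c', hθ'⟩, ?_⟩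
  have hθc' : dist θ c' ≤ r + ‖c - c'‖ := by
    rw [dist_eq_norm, ← sub_add_sub_cancel θ c c']
    exact (norm_add_le _ _).trans (add_le_add_left hθ.1 _)
  rw [← dist_eq_norm]
  refine hθθ'.trans (max_le ?_ (by positivity))
  linarith [le_abs_self (r - r')]

theorem sum_sub_mul_le_card_mul_norm {ι : Type*} [Fintype ι] {a : ι → ℝ} {M : ℝ}
    (ha : ∀ j, |a j| ≤ M) (θ θ' : ι → ℝ) : ∑ j, (θ j - θ' j) * a j ≤ Fintype.card ι * M * ‖θ - θ'‖ := by
  calc ∑ j, (θ j - θ' j) * a j ≤ ∑ _j : ι, M * ‖θ - θ'‖ := by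
        refine Finset.sum_le_sum fun j _ => ?_
        calc (θ j - θ' j) * a j ≤ |θ j - θ' j| * |a j| := by rw [← abs_mul]; exact le_abs_self _
          _ ≤ ‖θ - θ'‖ * M := mul_le_mul (norm_le_pi_norm (θ - θ') j) (ha j) (abs_nonneg _)
              (norm_nonneg _)
          _ = M * ‖θ - θ'‖ := mul_comm _ _
    _ = Fintype.card ι * M * ‖θ - θ'‖ := by simp [mul_assoc]

theorem sum_sq_sub_sum_sq_le_two_mul_norm {n : ℕ} {θ θ' : Fin n → ℝ} (hθ : θ ∈ simplex n)
    (hθ' : θ' ∈ simplex n) : ∑ j, θ' j ^ 2 - ∑ j, θ j ^ 2 ≤ 2 * ‖θ - θ'‖ := by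
  calc ∑ j, θ' j ^ 2 - ∑ j, θ j ^ 2 = ∑ j, (θ j + θ' j) * (θ' j - θ j) := by
        rw [← Finset.sum_sub_distrib]
        exact Finset.sum_congr rfl fun j _ => by ring
    _ ≤ ∑ j, (θ j + θ' j) * ‖θ - θ'‖ := by
        refine Finset.sum_le_sum fun j _ => mul_le_mul_of_nonneg_left ?_
          (add_nonneg (hθ.2 j) (hθ'.2 j))
        have := norm_le_pi_norm (θ - θ') j
        rw [Pi.sub_apply, Real.norm_eq_abs] at this
        linarith [neg_abs_le (θ j - θ' j)]
    _ = 2 * ‖θ - θ'‖ := by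
        rw [← Finset.sum_mul, Finset.sum_add_distrib, hθ.1, hθ'.1]
        ring

section Objective

variable {n d : ℕ} (h : Fin n → (Fin d → ℝ) → ℝ) {lam : ℝ} {x : Fin d → ℝ} {M : ℝ}

theorem obj_sub_obj_le (hlam : 0 ≤ lam) (hM : ∀ j, |h j x| ≤ M) {θ θ' : Fin n → ℝ}
    (hθ : θ ∈ simplex n) (hθ' : θ' ∈ simplex n) :
    obj h lam x θ - obj h lam x θ' ≤ ((n : ℝ) * M + 2 * lam) * ‖θ - θ'‖ := by
  have hlin := sum_sub_mul_le_card_mul_norm hM θ θ'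
  have hquad := mul_le_mul_of_nonneg_left (sum_sq_sub_sum_sq_le_two_mul_norm hθ hθ') hlam
  rw [Fintype.card_fin] at hlin
  have hsplit : obj h lam x θ - obj h lam x θ' =
      ∑ j, (θ j - θ' j) * h j x + lam * (∑ j, θ' j ^ 2 - ∑ j, θ j ^ 2) := by
    simp only [obj, sub_mul, Finset.sum_sub_distrib]
    ring
  rw [hsplit]
  linarith

theorem obj_le (hlam : 0 ≤ lam) (hM : ∀ j, |h j x| ≤ M) {θ : Fin n → ℝ} (hθ : θ ∈ simplex n) :
    obj h lam x θ ≤ M := by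
  have hlin : ∑ j, θ j * h j x ≤ ∑ j, θ j * M :=
    Finset.sum_le_sum fun j _ => mul_le_mul_of_nonneg_left ((le_abs_self _).trans (hM j)) (hθ.2 j)
  rw [← Finset.sum_mul, hθ.1, one_mul] at hlin
  have hquad : 0 ≤ lam * ∑ j, θ j ^ 2 := by positivity
  simp only [obj]
  linarith

theorem nuval_le_nuval_add (hlam : 0 ≤ lam) (hM : ∀ j, |h j x| ≤ M) {c c' : Fin n → ℝ}
    (hc : c ∈ simplex n) (hc' : c' ∈ simplex n) {r r' : ℝ} (hr : 0 ≤ r) (hr' : 0 ≤ r') :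
    nuval h lam x c r ≤ nuval h lam x c' r' + ((n : ℝ) * M + 2 * lam) * (‖c - c'‖ + |r - r'|) := by
  obtain ⟨j⟩ := nonempty_of_mem_simplex hc
  have hM0 : 0 ≤ M := (abs_nonneg _).trans (hM j)
  have hbdd : BddAbove (obj h lam x '' amb c' r') :=
    ⟨M, forall_mem_image.2 fun θ hθ => obj_le h hlam hM hθ.2⟩
  refine csSup_le ⟨_, mem_image_of_mem _ (mem_amb_self hc hr)⟩
    (forall_mem_image.2 fun θ hθ => ?_)
  obtain ⟨θ', hθ', hθθ'⟩ := exists_mem_amb_norm_sub_le hc' hr' hθ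
  have hobj := obj_sub_obj_le h hlam hM hθ.2 hθ'.2
  have hmove := mul_le_mul_of_nonneg_left hθθ' (by positivity : 0 ≤ (n : ℝ) * M + 2 * lam)
  have hsup : obj h lam x θ' ≤ nuval h lam x c' r' := le_csSup hbdd (mem_image_of_mem _ hθ')
  linarith

end Objective

theorem nu_param_lipschitz_general {n d : ℕ}
    (X : Set (Fin d → ℝ))
    (h : Fin n → (Fin d → ℝ) → ℝ) (M : ℝ) (hM : ∀ j, ∀ x ∈ X, |h j x| ≤ M) :
    ∀ x ∈ X, ∀ lam : ℝ, 0 ≤ lam →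
      ∀ θh ∈ simplex n, ∀ θt ∈ simplex n,
      ∀ rh ∈ Set.Icc (0 : ℝ) 1, ∀ rt ∈ Set.Icc (0 : ℝ) 1,
      |nuval h lam x θh rh - nuval h lam x θt rt|
        ≤ ((n : ℝ) * M + 2 * lam) * (‖θh - θt‖ + |rh - rt|) := by
  intro x hx lam hlam θh hθh θt hθt rh hrh rt hrt
  have hMx : ∀ j, |h j x| ≤ M := fun j => hM j x hx
  have hle := nuval_le_nuval_add h hlam hMx hθh hθt hrh.1 hrt.1
  have hge := nuval_le_nuval_add h hlam hMx hθt hθh hrt.1 hrh.1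
  rw [norm_sub_rev, abs_sub_comm] at hge
  rw [abs_sub_le_iff]
  constructor <;> linarith

/-- Lemma 4.2: Lipschitz continuity of the regularized optimal value in the
ambiguity-set parameters. -/
theorem nu_param_lipschitz {n d : ℕ} (hn : 1 ≤ n) (hd : 1 ≤ d)
    (X : Set (Fin d → ℝ)) (hXne : X.Nonempty) (hXcomp : IsCompact X) (hXconv : Convex ℝ X)
    (h : Fin n → (Fin d → ℝ) → ℝ) (M : ℝ) (hM : ∀ j, ∀ x ∈ X, |h j x| ≤ M) :
    ∀ x ∈ X, ∀ lam : ℝ, 0 ≤ lam →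
      ∀ θh ∈ simplex n, ∀ θt ∈ simplex n,
      ∀ rh ∈ Set.Icc (0 : ℝ) 1, ∀ rt ∈ Set.Icc (0 : ℝ) 1,
      |nuval h lam x θh rh - nuval h lam x θt rt|
        ≤ ((n : ℝ) * M + 2 * lam) * (‖θh - θt‖ + |rh - rt|) :=
  nu_param_lipschitz_general X h M hM
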